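/- arXiv:2510.05704 — 3 statements merged into one kernel-verified Lean document; each statement's English description precedes it below -/
import Mathlib

section
/- For b > 0, the map F(x) = x / (1 + b‖x‖) on a real inner product space is strictly monotone: for all x ≠ y, ⟨F(x) − F(y), x − y⟩ > 0. -/
/-!
Write `F x = φ ‖x‖ • x` with `φ r = (1 + b r)⁻¹`. Expanding the inner product splits
`⟪F x - F y, x - y⟫` into `(g ‖x‖ - g ‖y‖) (‖x‖ - ‖y‖)`, with `g r = φ r * r = r / (1 + b r)`
strictly increasing, plus `(φ ‖x‖ + φ ‖y‖) (‖x‖ ‖y‖ - ⟪x, y⟫)`, which is nonnegative by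
Cauchy–Schwarz. Both terms vanish only when `‖x‖ = ‖y‖` and `⟪x, y⟫ = ‖x‖ ‖y‖`, i.e. when `x = y`.
-/

open Set RealInnerProductSpace

theorem StrictMonoOn.sub_mul_sub_pos {g : ℝ → ℝ} {s : Set ℝ} (hg : StrictMonoOn g s)
    {a b : ℝ} (ha : a ∈ s) (hb : b ∈ s) (hab : a ≠ b) : 0 < (g a - g b) * (a - b) := by
  rcases hab.lt_or_gt with h | h
  · exact mul_pos_of_neg_of_neg (sub_neg.2 (hg ha hb h)) (sub_neg.2 h)
  · exact mul_pos (sub_pos.2 (hg hb ha h)) (sub_pos.2 h)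

section InnerProductSpace

variable {V : Type*} [NormedAddCommGroup V] [InnerProductSpace ℝ V]

theorem real_inner_smul_sub_smul_sub (α β : ℝ) (x y : V) :
    ⟪α • x - β • y, x - y⟫ = (α * ‖x‖ - β * ‖y‖) * (‖x‖ - ‖y‖)
      + (α + β) * (‖x‖ * ‖y‖ - ⟪x, y⟫) := by
  simp only [inner_sub_left, inner_sub_right, real_inner_smul_left,
    real_inner_self_eq_norm_sq, real_inner_comm x y]
  ring

theorem real_inner_lt_norm_mul_norm_of_norm_eq {x y : V} (hxy : x ≠ y) (hn : ‖x‖ = ‖y‖) :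
    ⟪x, y⟫ < ‖x‖ * ‖y‖ := by
  have hpos : 0 < ‖x - y‖ ^ 2 := by positivity [sub_ne_zero.2 hxy]
  rw [norm_sub_sq_real, hn] at hpos
  rw [hn]
  linarith

theorem real_inner_radial_sub_pos {φ : ℝ → ℝ} (hφ : ∀ r, 0 ≤ r → 0 < φ r)
    (hg : StrictMonoOn (fun r ↦ φ r * r) (Ici 0)) {x y : V} (hxy : x ≠ y) :
    0 < ⟪φ ‖x‖ • x - φ ‖y‖ • y, x - y⟫ := by
  rw [real_inner_smul_sub_smul_sub]
  by_cases hn : ‖x‖ = ‖y‖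
  · have hcs := real_inner_lt_norm_mul_norm_of_norm_eq hxy hn
    rw [hn] at hcs ⊢
    rw [sub_self, zero_mul, zero_add]
    exact mul_pos (add_pos (hφ _ (norm_nonneg y)) (hφ _ (norm_nonneg y))) (sub_pos.2 hcs)
  · have hφsum : 0 ≤ φ ‖x‖ + φ ‖y‖ :=
      add_nonneg (hφ _ (norm_nonneg x)).le (hφ _ (norm_nonneg y)).le
    have hradial : 0 < (φ ‖x‖ * ‖x‖ - φ ‖y‖ * ‖y‖) * (‖x‖ - ‖y‖) :=
      hg.sub_mul_sub_pos (norm_nonneg x) (norm_nonneg y) hn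
    have hcs : 0 ≤ ‖x‖ * ‖y‖ - ⟪x, y⟫ := sub_nonneg.2 (real_inner_le_norm x y)
    exact add_pos_of_pos_of_nonneg hradial (mul_nonneg hφsum hcs)

end InnerProductSpace

theorem strictMonoOn_inv_one_add_mul_mul {b : ℝ} (hb : 0 ≤ b) :
    StrictMonoOn (fun r ↦ (1 + b * r)⁻¹ * r) (Ici 0) := by
  intro s hs t ht hst
  simp only [mem_Ici] at hs ht
  dsimp only
  rw [inv_mul_eq_div, inv_mul_eq_div, div_lt_div_iff₀ (by positivity) (by positivity)]
  nlinarith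

theorem strainLimiting_strictMonotone
    {V : Type*} [NormedAddCommGroup V] [InnerProductSpace ℝ V]
    (b : ℝ) (hb : 0 < b) (x y : V) (hxy : x ≠ y) :
    (0 : ℝ) < inner ℝ ((1 + b * ‖x‖)⁻¹ • x - (1 + b * ‖y‖)⁻¹ • y) (x - y) :=
  real_inner_radial_sub_pos (φ := fun r ↦ (1 + b * r)⁻¹)
    (fun _ hr ↦ by positivity) (strictMonoOn_inv_one_add_mul_mul hb.le) hxy
end

section
/- For b > 0, the map F(x) = x / (1 + b‖x‖) on a real inner product space is Lipschitz continuous with Lipschitz constant 1. -/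
/-!
Writing `s = 1 + b‖x‖` and `t = 1 + b‖y‖`, one has
`s⁻¹ • x - t⁻¹ • y = (s t)⁻¹ • ((x - y) + b • (‖y‖ • x - ‖x‖ • y))`, and
`‖‖y‖ • x - ‖x‖ • y‖ ≤ (‖x‖ + ‖y‖) ‖x - y‖`, so the numerator has norm at most
`(1 + b (‖x‖ + ‖y‖)) ‖x - y‖ ≤ s t ‖x - y‖`.
-/

section NormedSpace

variable {E : Type*} [SeminormedAddCommGroup E] [NormedSpace ℝ E]

theorem norm_norm_smul_sub_norm_smul_le (x y : E) :
    ‖‖y‖ • x - ‖x‖ • y‖ ≤ (‖x‖ + ‖y‖) * ‖x - y‖ := by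
  have split : ‖y‖ • x - ‖x‖ • y =
      (2 : ℝ)⁻¹ • ((‖x‖ + ‖y‖) • (x - y) + (‖y‖ - ‖x‖) • (x + y)) := by
    module
  have hdiff : |‖y‖ - ‖x‖| ≤ ‖x - y‖ := by
    rw [abs_sub_comm]; exact abs_norm_sub_norm_le x y
  have hsum : ‖x + y‖ ≤ ‖x‖ + ‖y‖ := norm_add_le x y
  rw [split, norm_smul, norm_inv, Real.norm_two]
  calc 2⁻¹ * ‖(‖x‖ + ‖y‖) • (x - y) + (‖y‖ - ‖x‖) • (x + y)‖
      ≤ 2⁻¹ * ((‖x‖ + ‖y‖) * ‖x - y‖ + |‖y‖ - ‖x‖| * ‖x + y‖) := by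
        gcongr
        refine (norm_add_le _ _).trans_eq ?_
        rw [norm_smul, norm_smul, Real.norm_of_nonneg (by positivity), Real.norm_eq_abs]
    _ ≤ 2⁻¹ * ((‖x‖ + ‖y‖) * ‖x - y‖ + ‖x - y‖ * (‖x‖ + ‖y‖)) := by gcongr
    _ = (‖x‖ + ‖y‖) * ‖x - y‖ := by ring

theorem lipschitzWith_one_inv_one_add_mul_norm_smul {b : ℝ} (hb : 0 ≤ b) :
    LipschitzWith 1 (fun x : E => (1 + b * ‖x‖)⁻¹ • x) := by
  refine LipschitzWith.of_dist_le_mul fun x y => ?_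
  rw [dist_eq_norm, dist_eq_norm, NNReal.coe_one, one_mul]
  set s := 1 + b * ‖x‖
  set t := 1 + b * ‖y‖
  have hs : 0 < s := by positivity
  have ht : 0 < t := by positivity
  have hst : 0 < s * t := mul_pos hs ht
  have expand : t • x - s • y = (x - y) + b • (‖y‖ • x - ‖x‖ • y) := by
    simp only [s, t]
    module
  have common_denom : s⁻¹ • x - t⁻¹ • y = (s * t)⁻¹ • ((x - y) + b • (‖y‖ • x - ‖x‖ • y)) := by
    rw [← expand, smul_sub, smul_smul, smul_smul]
    congr 2 <;> field_simp
  have numerator : ‖(x - y) + b • (‖y‖ • x - ‖x‖ • y)‖ ≤ s * t * ‖x - y‖ :=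
    calc ‖(x - y) + b • (‖y‖ • x - ‖x‖ • y)‖
        ≤ ‖x - y‖ + b * ((‖x‖ + ‖y‖) * ‖x - y‖) := by
          refine (norm_add_le _ _).trans ?_
          rw [norm_smul, Real.norm_of_nonneg hb]
          gcongr
          exact norm_norm_smul_sub_norm_smul_le x y
      _ ≤ s * t * ‖x - y‖ := by
          have : 0 ≤ b * ‖x‖ * (b * ‖y‖) * ‖x - y‖ := by positivity
          simp only [s, t]
          nlinarith
  rw [common_denom, norm_smul, norm_inv, Real.norm_of_nonneg hst.le]
  exact (inv_mul_le_iff₀ hst).mpr numerator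

end NormedSpace

theorem strainLimiting_lipschitz
    {V : Type*} [NormedAddCommGroup V] [InnerProductSpace ℝ V]
    (b : ℝ) (hb : 0 < b) :
    LipschitzWith 1 (fun x : V => (1 + b * ‖x‖)⁻¹ • x) :=
  lipschitzWith_one_inv_one_add_mul_norm_smul hb.le
end

section
/- If a map F on a complete normed space satisfies the strong monotonicity and Lipschitz conditions ⟨F(x) − F(y), x − y⟩ ≥ c‖x − y‖² and ‖F(x) − F(y)‖ ≤ L‖x − y‖ with 0 < c ≤ L, then for any target vector z the equation F(x) = z has a unique solution, obtained as the fixed point of the contraction x ↦ x − ρ(F(x) − z) for ρ = c/L². -/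
/-!
Strong monotonicity with constant `c` and Lipschitz continuity with constant `L` give
`‖(x - y) - ρ • (F x - F y)‖² ≤ (1 - 2ρc + ρ²L²) ‖x - y‖²`; the step `ρ = c / L²` minimises the
factor, to `1 - (c / L)² < 1`. So `x ↦ x - ρ • (F x - z)` is a contraction of the complete
space `H`, and its unique fixed point, given by Banach's theorem, is the unique solution of
`F x = z`.
-/

open scoped RealInnerProductSpace

theorem ContractingWith.existsUnique_isFixedPt {α : Type*} [MetricSpace α] [Nonempty α]
    [CompleteSpace α] {K : NNReal} {f : α → α} (hf : ContractingWith K f) :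
    ∃! x, Function.IsFixedPt f x :=
  ⟨_, hf.fixedPoint_isFixedPt, fun _ hx ↦ hf.fixedPoint_unique hx⟩

section

variable {H : Type*} [NormedAddCommGroup H] [InnerProductSpace ℝ H]

theorem norm_sub_smul_sq_le {u v : H} {c L ρ : ℝ} (hρ : 0 ≤ ρ)
    (hmono : c * ‖u‖ ^ 2 ≤ ⟪v, u⟫) (hlip : ‖v‖ ≤ L * ‖u‖) :
    ‖u - ρ • v‖ ^ 2 ≤ (1 - 2 * ρ * c + ρ ^ 2 * L ^ 2) * ‖u‖ ^ 2 := by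
  have hlip_sq : ‖v‖ ^ 2 ≤ L ^ 2 * ‖u‖ ^ 2 := by
    rw [← mul_pow]; exact pow_le_pow_left₀ (norm_nonneg v) hlip 2
  have hexpand : ‖u - ρ • v‖ ^ 2 = ‖u‖ ^ 2 - 2 * ρ * ⟪v, u⟫ + ρ ^ 2 * ‖v‖ ^ 2 := by
    rw [norm_sub_sq_real, real_inner_smul_right, real_inner_comm, norm_smul,
      Real.norm_of_nonneg hρ]
    ring
  rw [hexpand]
  nlinarith [mul_le_mul_of_nonneg_left hmono (by positivity : 0 ≤ 2 * ρ),
    mul_le_mul_of_nonneg_left hlip_sq (sq_nonneg ρ)]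

theorem contractingWith_sub_smul_sub {F : H → H} {c L : ℝ} (hc : 0 < c) (hcL : c ≤ L)
    (hmono : ∀ x y : H, c * ‖x - y‖ ^ 2 ≤ ⟪F x - F y, x - y⟫)
    (hlip : ∀ x y : H, ‖F x - F y‖ ≤ L * ‖x - y‖) (z : H) :
    ContractingWith ⟨√(1 - (c / L) ^ 2), Real.sqrt_nonneg _⟩
      (fun x ↦ x - (c / L ^ 2) • (F x - z)) := by
  have hL : 0 < L := hc.trans_le hcL
  have hcL_sq : (c / L) ^ 2 ≤ 1 := pow_le_one₀ (by positivity) ((div_le_one hL).2 hcL)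
  refine ⟨?_, LipschitzWith.of_dist_le_mul fun x y ↦ ?_⟩
  · change √(1 - (c / L) ^ 2) < 1
    rw [Real.sqrt_lt' one_pos]
    nlinarith [pow_pos (div_pos hc hL) 2]
  · have hstep : x - (c / L ^ 2) • (F x - z) - (y - (c / L ^ 2) • (F y - z))
        = (x - y) - (c / L ^ 2) • (F x - F y) := by
      rw [smul_sub, smul_sub, smul_sub]; abel
    have hsq := norm_sub_smul_sq_le (div_nonneg hc.le (sq_nonneg L)) (hmono x y) (hlip x y)
    have hfactor : 1 - 2 * (c / L ^ 2) * c + (c / L ^ 2) ^ 2 * L ^ 2 = 1 - (c / L) ^ 2 := by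
      field_simp; ring
    rw [hfactor] at hsq
    change dist _ _ ≤ √(1 - (c / L) ^ 2) * dist x y
    rw [dist_eq_norm, dist_eq_norm, hstep, ← Real.sqrt_sq (norm_nonneg (x - y)),
      ← Real.sqrt_mul (by linarith), ← Real.sqrt_sq (norm_nonneg _)]
    exact Real.sqrt_le_sqrt hsq

theorem isFixedPt_sub_smul_sub_iff {F : H → H} {ρ : ℝ} (hρ : ρ ≠ 0) {z x : H} :
    Function.IsFixedPt (fun x ↦ x - ρ • (F x - z)) x ↔ F x = z := by
  simp [Function.IsFixedPt, hρ, sub_eq_zero]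

end

theorem zarantonello_exists_unique
    {H : Type*} [NormedAddCommGroup H] [InnerProductSpace ℝ H]
    [CompleteSpace H] (F : H → H) (c L : ℝ) (hc : 0 < c) (hcL : c ≤ L)
    (hmono : ∀ x y : H, c * ‖x - y‖ ^ 2 ≤ inner ℝ (F x - F y) (x - y))
    (hlip : ∀ x y : H, ‖F x - F y‖ ≤ L * ‖x - y‖) :
    ∀ z : H, ∃! x : H, F x = z := by
  intro z
  have hρ : c / L ^ 2 ≠ 0 := div_ne_zero hc.ne' (pow_ne_zero 2 (hc.trans_le hcL).ne')
  rw [← existsUnique_congr fun x ↦ isFixedPt_sub_smul_sub_iff hρ]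
  exact (contractingWith_sub_smul_sub hc hcL hmono hlip z).existsUnique_isFixedPt
end
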